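/- (State error bound for pH-OpInf-DEIM.) Let T > 0. Let x: [0,T] → ℝⁿ be continuously differentiable, u: [0,T] → ℝᵐ continuous, and d: [0,T] → ℝⁿ continuous (the approximate time-derivative data D_t[x]). Let Φ ∈ ℝⁿˣʳ have orthonormal columns (ΦᵀΦ = I_r). Let the Hamiltonian be H(x) = (1/2)xᵀQx + cᵀh(x) with Q ∈ ℝⁿˣⁿ symmetric, c ∈ ℝᵈ, h: ℝⁿ → ℝᵈ continuously differentiable with Jacobian J_h(x) ∈ ℝᵈˣⁿ, so ∇H(x) = Qx + J_h(x)ᵀc, and assume ∇H: ℝⁿ → ℝⁿ and J_h: ℝⁿ → ℝᵈˣⁿ (with spectral norm) are Lipschitz continuous with constants C_Lip[∇H] and C_Lip[J_h]. Let Ψ ∈ ℝᵈˣᵐ⁰ have orthonormal columns, P ∈ ℝᵈˣᵐ⁰ have columns that are distinct standard basis vectors of ℝᵈ with PᵀΨ invertible, and ℙ := Ψ(PᵀΨ)⁻¹Pᵀ. Let D_r ∈ ℝʳˣʳ, B_r ∈ ℝʳˣᵐ, Q_r := ΦᵀQΦ, and let x_r: [0,T] → ℝʳ be continuously differentiable with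 ẋ_r(t) = D_r(Q_r x_r(t) + Φᵀ J_h(Φ x_r(t))ᵀ ℙᵀ c) + B_r u(t) and x_r(0) = Φᵀx(0). Define C₁ := μ(Φ D_r Φᵀ Q) + ‖D_rΦᵀ‖·C_Lip[J_h]·‖(PᵀΨ)⁻¹‖·‖c‖, C₂ := ‖D_rΦᵀ‖·C_Lip[∇H], C₃ := ‖D_r‖·‖c‖, α(T) := 4∫₀ᵀ e^{2C₁(T−τ)} dτ, and C(T) := max{1 + C₂²·T·α(T), C₃²·T·α(T), T·α(T)}. Then ∫₀ᵀ ‖x(t) − Φx_r(t)‖² dt ≤ C(T)·( ∫₀ᵀ ‖x(t) − ΦΦᵀx(t)‖² dt + ∫₀ᵀ ‖ẋ(t) − d(t)‖² dt + ∫₀ᵀ ‖Φᵀd(t) − D_rΦᵀ∇H(x(t)) − B_r u(t)‖² dt + ∫₀ᵀ ‖(I − ℙ)J_h(ΦΦᵀx(t))Φ‖² dt ). -/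

import Mathlib

/-!
Write `x - Φ x_r = (x - ΦΦᵀx) + Φ ε` with `ε = Φᵀx - x_r`; the two parts are orthogonal, so the
squared state error is the projection error plus `‖ε‖²`. Since `ε(0) = 0` and `ε̇` splits into the
data error, the optimization residual, a gradient mismatch at `ΦΦᵀx`, the linear part
`D_r Φᵀ Q Φ ε`, a DEIM Jacobian mismatch and the hyper-reduction error, bounding `⟪ε, ε̇⟫` term by
term gives `⟪ε, ε̇⟫ ≤ C₁ ‖ε‖² + g ‖ε‖`, with `g` the weighted sum of the four pointwise errors; here
`‖ℙ‖ ≤ ‖(PᵀΨ)⁻¹‖` because `Ψ` and `P` have orthonormal columns. A comparison argument turns this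
into `‖ε(t)‖ ≤ ∫₀ᵗ e^{C₁(t-s)} g(s) ds`, and Cauchy–Schwarz together with
`(a + b + c + d)² ≤ 4 (a² + b² + c² + d²)` bounds `∫₀ᵀ ‖ε‖²` by `T α(T) / 4 · ∫₀ᵀ g²`.
-/

open Matrix MeasureTheory RealInnerProductSpace

noncomputable section

/-- Euclidean space `ℝⁿ`. -/
abbrev Evec (n : ℕ) := EuclideanSpace ℝ (Fin n)

/-- Matrix-vector product on Euclidean spaces. -/
def mv {a b : ℕ} (M : Matrix (Fin a) (Fin b) ℝ) (v : Evec b) : Evec a := WithLp.toLp 2 (M.mulVec v)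

/-- Spectral (operator) norm of a real matrix, viewed as a linear map between
Euclidean spaces. -/
def spec {a b : ℕ} (M : Matrix (Fin a) (Fin b) ℝ) : ℝ :=
  ‖LinearMap.toContinuousLinearMap (Matrix.toEuclideanLin M)‖

/-- Logarithmic norm `μ(A) = sup_{v ≠ 0} ⟪v, A v⟫ / ⟪v, v⟫` of a real square matrix. -/
def logNorm {a : ℕ} (A : Matrix (Fin a) (Fin a) ℝ) : ℝ :=
  sSup {s : ℝ | ∃ v : Evec a, v ≠ 0 ∧ s = ⟪v, mv A v⟫ / ⟪v, v⟫}


open scoped Matrix.Norms.L2Operator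
open Set

section MatrixVector

variable {a b k : ℕ}

lemma spec_nonneg (M : Matrix (Fin a) (Fin b) ℝ) : 0 ≤ spec M := norm_nonneg M

lemma spec_transpose (M : Matrix (Fin a) (Fin b) ℝ) : spec Mᵀ = spec M :=
  Matrix.l2_opNorm_conjTranspose M

lemma spec_mul_le (M : Matrix (Fin a) (Fin b) ℝ) (N : Matrix (Fin b) (Fin k) ℝ) :
    spec (M * N) ≤ spec M * spec N :=
  Matrix.l2_opNorm_mul M N

lemma norm_mv_le (M : Matrix (Fin a) (Fin b) ℝ) (v : Evec b) : ‖mv M v‖ ≤ spec M * ‖v‖ :=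
  Matrix.l2_opNorm_mulVec M v

lemma mv_mv (M : Matrix (Fin a) (Fin b) ℝ) (N : Matrix (Fin b) (Fin k) ℝ) (v : Evec k) :
    mv M (mv N v) = mv (M * N) v := by
  simp [mv, Matrix.mulVec_mulVec]

lemma mv_one (v : Evec a) : mv (1 : Matrix (Fin a) (Fin a) ℝ) v = v := by
  simp [mv]

lemma mv_add (M : Matrix (Fin a) (Fin b) ℝ) (u v : Evec b) : mv M (u + v) = mv M u + mv M v :=
  map_add (Matrix.toEuclideanLin M) u v

lemma mv_sub (M : Matrix (Fin a) (Fin b) ℝ) (u v : Evec b) : mv M (u - v) = mv M u - mv M v :=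
  map_sub (Matrix.toEuclideanLin M) u v

lemma sub_mv (M N : Matrix (Fin a) (Fin b) ℝ) (v : Evec b) :
    mv (M - N) v = mv M v - mv N v := by
  simp [mv, Matrix.sub_mulVec]

lemma inner_mv_left (M : Matrix (Fin a) (Fin b) ℝ) (u : Evec b) (v : Evec a) :
    ⟪mv M u, v⟫ = ⟪u, mv Mᵀ v⟫ := by
  simp only [mv, PiLp.inner_apply, RCLike.inner_apply, conj_trivial]
  exact (Matrix.dotProduct_mulVec v M u).trans (by rw [← Matrix.mulVec_transpose]; rfl)

lemma continuous_mv (M : Matrix (Fin a) (Fin b) ℝ) : Continuous (mv M) :=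
  (Matrix.toEuclideanLin M).continuous_of_finiteDimensional

lemma HasDerivAt.mv (M : Matrix (Fin a) (Fin b) ℝ) {f : ℝ → Evec b} {f' : Evec b} {t : ℝ}
    (hf : HasDerivAt f f' t) : HasDerivAt (fun s => mv M (f s)) (mv M f') t :=
  (LinearMap.toContinuousLinearMap (Matrix.toEuclideanLin M)).hasFDerivAt.comp_hasDerivAt t hf

lemma ContinuousOn.mv (M : Matrix (Fin a) (Fin b) ℝ) {f : ℝ → Evec b} {s : Set ℝ}
    (hf : ContinuousOn f s) : ContinuousOn (fun t => mv M (f t)) s :=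
  (continuous_mv M).comp_continuousOn hf

lemma inner_mv_self_le_logNorm (A : Matrix (Fin a) (Fin a) ℝ) (v : Evec a) :
    ⟪v, mv A v⟫ ≤ logNorm A * ‖v‖ ^ 2 := by
  rcases eq_or_ne v 0 with rfl | hv
  · simp
  have hv2 : 0 < ‖v‖ ^ 2 := by positivity
  have hbdd : BddAbove {s : ℝ | ∃ w : Evec a, w ≠ 0 ∧ s = ⟪w, mv A w⟫ / ⟪w, w⟫} := by
    refine ⟨spec A, ?_⟩
    rintro s ⟨w, hw, rfl⟩
    rw [real_inner_self_eq_norm_sq, div_le_iff₀ (by positivity)]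
    calc ⟪w, mv A w⟫ ≤ ‖w‖ * (spec A * ‖w‖) :=
          (real_inner_le_norm _ _).trans (by gcongr; exact norm_mv_le A w)
      _ = spec A * ‖w‖ ^ 2 := by ring
  have hle : ⟪v, mv A v⟫ / ‖v‖ ^ 2 ≤ logNorm A := by
    rw [← real_inner_self_eq_norm_sq]
    exact le_csSup hbdd ⟨v, hv, rfl⟩
  rwa [div_le_iff₀ hv2] at hle

end MatrixVector

section OrthonormalColumns

variable {a b : ℕ} {M : Matrix (Fin a) (Fin b) ℝ}

lemma norm_mv_of_orthonormal_columns (hM : Mᵀ * M = 1) (v : Evec b) : ‖mv M v‖ = ‖v‖ := by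
  have h : ⟪mv M v, mv M v⟫ = ⟪v, v⟫ := by rw [inner_mv_left, mv_mv, hM, mv_one]
  rw [real_inner_self_eq_norm_sq, real_inner_self_eq_norm_sq] at h
  exact (pow_left_inj₀ (norm_nonneg _) (norm_nonneg _) two_ne_zero).mp h

lemma spec_le_one_of_orthonormal_columns (hM : Mᵀ * M = 1) : spec M ≤ 1 :=
  ContinuousLinearMap.opNorm_le_bound _ zero_le_one fun v =>
    (norm_mv_of_orthonormal_columns hM v).trans_le (one_mul _).ge

lemma norm_mv_transpose_le_of_orthonormal_columns (hM : Mᵀ * M = 1) (v : Evec a) :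
    ‖mv Mᵀ v‖ ≤ ‖v‖ :=
  (norm_mv_le _ v).trans <| by
    rw [spec_transpose]
    exact mul_le_of_le_one_left (norm_nonneg v) (spec_le_one_of_orthonormal_columns hM)

lemma transpose_mul_self_of_selection {℘ : Fin b → Fin a} (h℘ : Function.Injective ℘)
    (hM : ∀ i j, M i j = if i = ℘ j then 1 else 0) : Mᵀ * M = 1 := by
  ext i j
  simp [Matrix.mul_apply, hM, Matrix.one_apply, h℘.eq_iff, eq_comm]

lemma spec_mul_mul_transpose_le {k : ℕ} {Ψ P : Matrix (Fin a) (Fin k) ℝ}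
    (hΨ : Ψᵀ * Ψ = 1) (hP : Pᵀ * P = 1) (N : Matrix (Fin k) (Fin k) ℝ) :
    spec (Ψ * N * Pᵀ) ≤ spec N := by
  have hPt : spec Pᵀ ≤ 1 := spec_transpose P ▸ spec_le_one_of_orthonormal_columns hP
  calc spec (Ψ * N * Pᵀ) ≤ spec Ψ * spec N * spec Pᵀ :=
        (spec_mul_le _ _).trans (by gcongr; exacts [spec_nonneg _, spec_mul_le _ _])
    _ ≤ 1 * spec N * 1 := by
        have := spec_nonneg Pᵀ
        have := spec_nonneg N
        gcongr
        exact spec_le_one_of_orthonormal_columns hΨ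
    _ = spec N := by ring

lemma norm_sub_mv_sq_of_orthonormal_columns (hM : Mᵀ * M = 1) (x : Evec a) (y : Evec b) :
    ‖x - mv M y‖ ^ 2 = ‖x - mv M (mv Mᵀ x)‖ ^ 2 + ‖mv Mᵀ x - y‖ ^ 2 := by
  have horth : ⟪x - mv M (mv Mᵀ x), mv M (mv Mᵀ x - y)⟫ = 0 := by
    rw [real_inner_comm, inner_mv_left, mv_sub, mv_mv Mᵀ M, hM, mv_one, sub_self,
      inner_zero_right]
  have hsplit : x - mv M y = (x - mv M (mv Mᵀ x)) + mv M (mv Mᵀ x - y) := by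
    rw [mv_sub]; abel
  rw [hsplit, norm_add_sq_real, horth, norm_mv_of_orthonormal_columns hM]
  ring

end OrthonormalColumns

theorem sq_integral_mul_le_integral_sq_mul_integral_sq {α : Type*} [MeasurableSpace α]
    {μ : Measure α} {f g : α → ℝ} (hf : Integrable (fun a => f a ^ 2) μ)
    (hg : Integrable (fun a => g a ^ 2) μ) (hfg : Integrable (fun a => f a * g a) μ) :
    (∫ a, f a * g a ∂μ) ^ 2 ≤ (∫ a, f a ^ 2 ∂μ) * ∫ a, g a ^ 2 ∂μ := by
  have hquad : ∀ l : ℝ, 0 ≤ (∫ a, f a ^ 2 ∂μ) * (l * l) + (-2 * ∫ a, f a * g a ∂μ) * l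
      + ∫ a, g a ^ 2 ∂μ := fun l => by
    have hexp : ∫ a, (l * f a - g a) ^ 2 ∂μ = (∫ a, f a ^ 2 ∂μ) * (l * l)
        + (-2 * ∫ a, f a * g a ∂μ) * l + ∫ a, g a ^ 2 ∂μ := by
      have h : ∀ a, (l * f a - g a) ^ 2 = (l * l) * f a ^ 2 + (-2 * l) * (f a * g a) + g a ^ 2 :=
        fun a => by ring
      simp only [h]
      rw [integral_add ((hf.const_mul _).fun_add (hfg.const_mul _)) hg,
        integral_add (hf.const_mul _) (hfg.const_mul _), integral_const_mul, integral_const_mul]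
      ring
    exact hexp ▸ integral_nonneg fun a => sq_nonneg _
  have := discrim_le_zero hquad
  rw [discrim] at this
  linarith

theorem sq_intervalIntegral_mul_le {a b : ℝ} (hab : a ≤ b) {f g : ℝ → ℝ}
    (hf : ContinuousOn f (Icc a b)) (hg : ContinuousOn g (Icc a b)) :
    (∫ s in a..b, f s * g s) ^ 2 ≤ (∫ s in a..b, f s ^ 2) * ∫ s in a..b, g s ^ 2 := by
  simp only [intervalIntegral.integral_of_le hab]
  exact sq_integral_mul_le_integral_sq_mul_integral_sq
    ((hf.pow 2).integrableOn_Icc.mono_set Ioc_subset_Icc_self)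
    ((hg.pow 2).integrableOn_Icc.mono_set Ioc_subset_Icc_self)
    ((hf.mul hg).integrableOn_Icc.mono_set Ioc_subset_Icc_self)

section Gronwall

variable {E : Type*} [NormedAddCommGroup E] [InnerProductSpace ℝ E]
  {T C : ℝ} {e e' : ℝ → E} {g : ℝ → ℝ}

theorem norm_le_of_inner_deriv_le {b : ℝ → ℝ}
    (he : ∀ t ∈ Icc 0 T, HasDerivAt e (e' t) t)
    (hb : ∀ t ∈ Icc 0 T, HasDerivAt b (C * b t + g t) t) (hb0 : ∀ t ∈ Icc 0 T, 0 ≤ b t)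
    (h0 : ‖e 0‖ ≤ b 0)
    (hineq : ∀ t ∈ Icc 0 T, ⟪e t, e' t⟫ ≤ C * ‖e t‖ ^ 2 + g t * ‖e t‖) :
    ∀ t ∈ Icc 0 T, ‖e t‖ ≤ b t := by
  -- compare `‖e‖²` with `(b + ε e^{Kt})²` for some `K > C`, then let `ε → 0`
  set K := |C| + 1
  have hKC : C < K := (le_abs_self C).trans_lt (lt_add_one _)
  have hcomp : ∀ ε > 0, ∀ t ∈ Icc 0 T, ‖e t‖ ^ 2 ≤ (b t + ε * Real.exp (K * t)) ^ 2 := by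
    intro ε hε
    have hw : ∀ t ∈ Icc 0 T, HasDerivAt (fun s => b s + ε * Real.exp (K * s))
        (C * b t + g t + ε * (Real.exp (K * t) * K)) t := fun t ht =>
      (hb t ht).add (((hasDerivAt_const_mul K).exp).const_mul ε)
    refine image_le_of_deriv_right_lt_deriv_boundary'
      (fun t ht => (he t ht).norm_sq.continuousAt.continuousWithinAt)
      (fun t ht => (he t (Ico_subset_Icc_self ht)).norm_sq.hasDerivWithinAt) ?_
      (fun t ht => ((hw t ht).pow 2).continuousAt.continuousWithinAt)
      (fun t ht => ((hw t (Ico_subset_Icc_self ht)).pow 2).hasDerivWithinAt) ?_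
    · exact pow_le_pow_left₀ (norm_nonneg _) (h0.trans (le_add_of_nonneg_right (by positivity))) 2
    · intro t ht hcontact
      have htIcc := Ico_subset_Icc_self ht
      have hεt : 0 < ε * Real.exp (K * t) := by positivity
      have hw_pos : 0 < b t + ε * Real.exp (K * t) := by linarith [hb0 t htIcc]
      have hnorm : ‖e t‖ = b t + ε * Real.exp (K * t) :=
        (pow_left_inj₀ (norm_nonneg _) hw_pos.le two_ne_zero).mp hcontact
      have hineq_t := hineq t htIcc
      rw [hnorm] at hineq_t
      -- at a contact point the comparison function grows faster by `2 ‖e‖ ε e^{Kt} (K - C) > 0`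
      have hgap : 0 < 2 * (b t + ε * Real.exp (K * t)) * (ε * Real.exp (K * t)) * (K - C) :=
        mul_pos (by positivity) (sub_pos.2 hKC)
      simp only [Nat.reduceSub, pow_one, Nat.cast_ofNat]
      nlinarith
  intro t ht
  refine le_of_forall_pos_le_add fun δ hδ => ?_
  have h := hcomp (δ / Real.exp (K * t)) (by positivity) t ht
  rw [div_mul_cancel₀ _ (Real.exp_pos _).ne'] at h
  exact (pow_le_pow_iff_left₀ (norm_nonneg _) (by linarith [hb0 t ht]) two_ne_zero).mp h

theorem hasDerivAt_integral_exp_mul_sub (hg : Continuous g) (t : ℝ) :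
    HasDerivAt (fun t => ∫ s in (0 : ℝ)..t, Real.exp (C * (t - s)) * g s)
      (C * (∫ s in (0 : ℝ)..t, Real.exp (C * (t - s)) * g s) + g t) t := by
  have hfactor : ∀ t, ∫ s in (0 : ℝ)..t, Real.exp (C * (t - s)) * g s
      = Real.exp (C * t) * ∫ s in (0 : ℝ)..t, Real.exp (-(C * s)) * g s := fun t => by
    rw [← intervalIntegral.integral_const_mul]
    congr 1 with s
    rw [← mul_assoc, ← Real.exp_add]
    ring_nf
  simp only [hfactor]
  have hI : HasDerivAt (fun t => ∫ s in (0 : ℝ)..t, Real.exp (-(C * s)) * g s)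
      (Real.exp (-(C * t)) * g t) t :=
    ((Continuous.mul (by fun_prop) hg).integral_hasStrictDerivAt 0 t).hasDerivAt
  refine (((hasDerivAt_const_mul C).exp).mul hI).congr_deriv ?_
  rw [← mul_assoc, ← Real.exp_add, add_neg_cancel, Real.exp_zero]
  ring

theorem norm_le_integral_exp_mul_of_inner_deriv_le (hT : 0 ≤ T)
    (he : ∀ t ∈ Icc 0 T, HasDerivAt e (e' t) t) (he0 : e 0 = 0)
    (hg : ContinuousOn g (Icc 0 T)) (hg0 : ∀ t ∈ Icc 0 T, 0 ≤ g t)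
    (hineq : ∀ t ∈ Icc 0 T, ⟪e t, e' t⟫ ≤ C * ‖e t‖ ^ 2 + g t * ‖e t‖) :
    ∀ t ∈ Icc 0 T, ‖e t‖ ≤ ∫ s in (0 : ℝ)..t, Real.exp (C * (t - s)) * g s := by
  -- `ĝ` extends `g` continuously to `ℝ` so that the fundamental theorem of calculus applies
  set ĝ : ℝ → ℝ := fun t => g (projIcc 0 T hT t)
  have hĝ : Continuous ĝ := hg.comp_continuous (continuous_subtype_val.comp continuous_projIcc)
    fun t => (projIcc 0 T hT t).2
  have hĝg : ∀ t ∈ Icc 0 T, ĝ t = g t := fun t ht => by simp only [ĝ, projIcc_of_mem hT ht]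
  have hint : ∀ t ∈ Icc 0 T, ∫ s in (0 : ℝ)..t, Real.exp (C * (t - s)) * ĝ s
      = ∫ s in (0 : ℝ)..t, Real.exp (C * (t - s)) * g s := fun t ht =>
    intervalIntegral.integral_congr fun s hs => by
      rw [uIcc_of_le ht.1] at hs
      rw [hĝg s ⟨hs.1, hs.2.trans ht.2⟩]
  intro t ht
  rw [← hint t ht]
  refine norm_le_of_inner_deriv_le he (fun t _ => hasDerivAt_integral_exp_mul_sub hĝ t)
    (fun t ht => ?_) (by simp [he0]) (fun t ht => hĝg t ht ▸ hineq t ht) t ht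
  rw [hint t ht]
  exact intervalIntegral.integral_nonneg ht.1 fun s hs =>
    mul_nonneg (Real.exp_pos _).le (hg0 s ⟨hs.1, hs.2.trans ht.2⟩)

lemma integral_sq_exp_mul_sub_le {t : ℝ} (ht : t ∈ Icc 0 T) :
    ∫ s in (0 : ℝ)..t, Real.exp (C * (t - s)) ^ 2
      ≤ ∫ τ in (0 : ℝ)..T, Real.exp (2 * C * (T - τ)) := by
  have hshift : ∀ t, ∫ s in (0 : ℝ)..t, Real.exp (2 * C * (t - s))
      = ∫ s in (0 : ℝ)..t, Real.exp (2 * C * s) := fun t => by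
    simpa using intervalIntegral.integral_comp_sub_left (a := 0) (b := t)
      (fun s => Real.exp (2 * C * s)) t
  calc ∫ s in (0 : ℝ)..t, Real.exp (C * (t - s)) ^ 2
      = ∫ s in (0 : ℝ)..t, Real.exp (2 * C * s) := by
        rw [← hshift]
        congr 1 with s
        rw [← Real.exp_nat_mul]
        ring_nf
    _ ≤ ∫ s in (0 : ℝ)..T, Real.exp (2 * C * s) :=
        intervalIntegral.integral_mono_interval le_rfl ht.1 ht.2
          (Filter.Eventually.of_forall fun s => (Real.exp_pos _).le)
          (Continuous.intervalIntegrable (by fun_prop) _ _)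
    _ = ∫ τ in (0 : ℝ)..T, Real.exp (2 * C * (T - τ)) := (hshift T).symm

theorem integral_sq_norm_le_of_inner_deriv_le (hT : 0 ≤ T)
    (he : ∀ t ∈ Icc 0 T, HasDerivAt e (e' t) t) (he0 : e 0 = 0)
    (hg : ContinuousOn g (Icc 0 T)) (hg0 : ∀ t ∈ Icc 0 T, 0 ≤ g t)
    (hineq : ∀ t ∈ Icc 0 T, ⟪e t, e' t⟫ ≤ C * ‖e t‖ ^ 2 + g t * ‖e t‖) :
    ∫ t in (0 : ℝ)..T, ‖e t‖ ^ 2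
      ≤ T * (∫ τ in (0 : ℝ)..T, Real.exp (2 * C * (T - τ))) * ∫ t in (0 : ℝ)..T, g t ^ 2 := by
  set A := ∫ τ in (0 : ℝ)..T, Real.exp (2 * C * (T - τ))
  set G := ∫ t in (0 : ℝ)..T, g t ^ 2
  have hpointwise : ∀ t ∈ Icc 0 T, ‖e t‖ ^ 2 ≤ A * G := fun t ht => by
    have hgt : ContinuousOn g (Icc 0 t) := hg.mono (Icc_subset_Icc_right ht.2)
    calc ‖e t‖ ^ 2 ≤ (∫ s in (0 : ℝ)..t, Real.exp (C * (t - s)) * g s) ^ 2 :=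
          pow_le_pow_left₀ (norm_nonneg _)
            (norm_le_integral_exp_mul_of_inner_deriv_le hT he he0 hg hg0 hineq t ht) 2
      _ ≤ (∫ s in (0 : ℝ)..t, Real.exp (C * (t - s)) ^ 2) * ∫ s in (0 : ℝ)..t, g s ^ 2 :=
          sq_intervalIntegral_mul_le ht.1 (by fun_prop) hgt
      _ ≤ A * G := by
          gcongr
          · exact intervalIntegral.integral_nonneg ht.1 fun _ _ => sq_nonneg _
          · exact intervalIntegral.integral_nonneg hT fun _ _ => (Real.exp_pos _).le
          · exact integral_sq_exp_mul_sub_le ht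
          · exact intervalIntegral.integral_mono_interval le_rfl ht.1 ht.2
              (Filter.Eventually.of_forall fun _ => sq_nonneg _)
              ((hg.pow 2).intervalIntegrable_of_Icc hT)
  calc ∫ t in (0 : ℝ)..T, ‖e t‖ ^ 2 ≤ ∫ _ in (0 : ℝ)..T, A * G :=
        intervalIntegral.integral_mono_on hT
          (((HasDerivAt.continuousOn he).norm.pow 2).intervalIntegrable_of_Icc hT)
          intervalIntegrable_const hpointwise
    _ = T * A * G := by rw [intervalIntegral.integral_const, smul_eq_mul, sub_zero, mul_assoc]

end Gronwall

section ReducedOrderError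

variable {n r d m : ℕ} {Φ : Matrix (Fin n) (Fin r) ℝ} {Q : Matrix (Fin n) (Fin n) ℝ}
  {c : Evec d} {Jh : Evec n → Matrix (Fin d) (Fin n) ℝ} {gH : Evec n → Evec n}
  {Pbb : Matrix (Fin d) (Fin d) ℝ} {Dr : Matrix (Fin r) (Fin r) ℝ} {Br : Matrix (Fin r) (Fin m) ℝ}

theorem mv_transpose_sub_rom_eq (hgH : ∀ p, gH p = mv Q p + mv (Jh p)ᵀ c)
    (x x' dv : Evec n) (uv : Evec m) (xr : Evec r) :
    mv Φᵀ x' - (mv Dr (mv (Φᵀ * Q * Φ) xr + mv Φᵀ (mv (Jh (mv Φ xr))ᵀ (mv Pbbᵀ c))) + mv Br uv)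
      = mv Φᵀ (x' - dv)
        + (mv Φᵀ dv - mv Dr (mv Φᵀ (gH x)) - mv Br uv)
        + mv (Dr * Φᵀ) (gH x - gH (mv Φ (mv Φᵀ x)))
        + mv (Dr * (Φᵀ * Q * Φ)) (mv Φᵀ x - xr)
        + mv (Dr * Φᵀ) (mv (Jh (mv Φ (mv Φᵀ x)) - Jh (mv Φ xr))ᵀ (mv Pbbᵀ c))
        + mv Dr (mv ((1 - Pbb) * Jh (mv Φ (mv Φᵀ x)) * Φ)ᵀ c) := by
  rw [hgH x, hgH (mv Φ (mv Φᵀ x))]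
  simp only [mv_add, mv_sub, sub_mv, mv_mv, Matrix.transpose_sub, Matrix.transpose_mul,
    Matrix.sub_mul, Matrix.one_mul, Matrix.mul_assoc]
  abel

lemma continuous_of_norm_sub_le {E F : Type*} [SeminormedAddCommGroup E]
    [SeminormedAddCommGroup F] {f : E → F} {C : ℝ} (h : ∀ a b, ‖f a - f b‖ ≤ C * ‖a - b‖) :
    Continuous f :=
  (LipschitzWith.of_dist_le' fun a b => by simpa only [dist_eq_norm] using h a b).continuous

lemma inner_le_mul_norm_of_norm_le {E : Type*} [NormedAddCommGroup E] [InnerProductSpace ℝ E]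
    {v w : E} {a : ℝ} (h : ‖w‖ ≤ a) : ⟪v, w⟫ ≤ a * ‖v‖ :=
  (real_inner_le_norm v w).trans (by rw [mul_comm]; gcongr)

theorem inner_mv_transpose_sub_rom_le {CLipH CLipJ K : ℝ} (hΦ : Φᵀ * Φ = 1)
    (hgH : ∀ p, gH p = mv Q p + mv (Jh p)ᵀ c)
    (hLipH : ∀ a b : Evec n, ‖gH a - gH b‖ ≤ CLipH * ‖a - b‖)
    (hLipJ : ∀ a b : Evec n, spec (Jh a - Jh b) ≤ CLipJ * ‖a - b‖) (hPbb : spec Pbb ≤ K)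
    (x x' dv : Evec n) (uv : Evec m) (xr : Evec r) :
    ⟪mv Φᵀ x - xr,
        mv Φᵀ x' - (mv Dr (mv (Φᵀ * Q * Φ) xr + mv Φᵀ (mv (Jh (mv Φ xr))ᵀ (mv Pbbᵀ c)))
          + mv Br uv)⟫
      ≤ (logNorm (Φ * Dr * Φᵀ * Q) + spec (Dr * Φᵀ) * CLipJ * K * ‖c‖) * ‖mv Φᵀ x - xr‖ ^ 2
        + (‖x' - dv‖ + ‖mv Φᵀ dv - mv Dr (mv Φᵀ (gH x)) - mv Br uv‖
          + spec (Dr * Φᵀ) * CLipH * ‖x - mv Φ (mv Φᵀ x)‖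
          + spec Dr * ‖c‖ * spec ((1 - Pbb) * Jh (mv Φ (mv Φᵀ x)) * Φ)) * ‖mv Φᵀ x - xr‖ := by
  set p := mv Φ (mv Φᵀ x)
  set ε := mv Φᵀ x - xr
  have hΦε : ‖mv Φ ε‖ = ‖ε‖ := norm_mv_of_orthonormal_columns hΦ ε
  have hdata : ⟪ε, mv Φᵀ (x' - dv)⟫ ≤ ‖x' - dv‖ * ‖ε‖ :=
    inner_le_mul_norm_of_norm_le (norm_mv_transpose_le_of_orthonormal_columns hΦ _)
  have hresidual : ⟪ε, mv Φᵀ dv - mv Dr (mv Φᵀ (gH x)) - mv Br uv⟫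
      ≤ ‖mv Φᵀ dv - mv Dr (mv Φᵀ (gH x)) - mv Br uv‖ * ‖ε‖ :=
    inner_le_mul_norm_of_norm_le le_rfl
  have hgrad : ⟪ε, mv (Dr * Φᵀ) (gH x - gH p)⟫ ≤ spec (Dr * Φᵀ) * CLipH * ‖x - p‖ * ‖ε‖ :=
    inner_le_mul_norm_of_norm_le <| (norm_mv_le _ _).trans <| by
      rw [mul_assoc]; gcongr; exacts [spec_nonneg _, hLipH x p]
  -- `Φ` is an isometry, so the reduced linear part is bounded by the logarithmic norm of its lift
  have hlinear : ⟪ε, mv (Dr * (Φᵀ * Q * Φ)) ε⟫ ≤ logNorm (Φ * Dr * Φᵀ * Q) * ‖ε‖ ^ 2 := by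
    have hlift : Dr * (Φᵀ * Q * Φ) = Φᵀ * (Φ * Dr * Φᵀ * Q) * Φ := by
      simp only [← Matrix.mul_assoc, hΦ, Matrix.one_mul]
    rw [hlift, ← mv_mv, ← mv_mv, ← inner_mv_left, ← hΦε]
    exact inner_mv_self_le_logNorm _ _
  have hdeim : ⟪ε, mv (Dr * Φᵀ) (mv (Jh p - Jh (mv Φ xr))ᵀ (mv Pbbᵀ c))⟫
      ≤ spec (Dr * Φᵀ) * CLipJ * K * ‖c‖ * ‖ε‖ ^ 2 := by
    have hJ : spec (Jh p - Jh (mv Φ xr)) ≤ CLipJ * ‖ε‖ := by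
      simpa only [p, ε, ← mv_sub, hΦε] using hLipJ p (mv Φ xr)
    have hc : ‖mv Pbbᵀ c‖ ≤ K * ‖c‖ :=
      (norm_mv_le _ _).trans (by rw [spec_transpose]; gcongr)
    have hnorm : ‖mv (Dr * Φᵀ) (mv (Jh p - Jh (mv Φ xr))ᵀ (mv Pbbᵀ c))‖
        ≤ spec (Dr * Φᵀ) * CLipJ * K * ‖c‖ * ‖ε‖ :=
      calc _ ≤ spec (Dr * Φᵀ) * (spec (Jh p - Jh (mv Φ xr))ᵀ * ‖mv Pbbᵀ c‖) :=
            (norm_mv_le _ _).trans (by gcongr; exacts [spec_nonneg _, norm_mv_le _ _])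
        _ ≤ spec (Dr * Φᵀ) * (CLipJ * ‖ε‖ * (K * ‖c‖)) := by
            rw [spec_transpose]
            gcongr
            exacts [spec_nonneg _, (spec_nonneg _).trans hJ]
        _ = spec (Dr * Φᵀ) * CLipJ * K * ‖c‖ * ‖ε‖ := by ring
    exact (inner_le_mul_norm_of_norm_le hnorm).trans_eq (by ring)
  have hhyper : ⟪ε, mv Dr (mv ((1 - Pbb) * Jh p * Φ)ᵀ c)⟫
      ≤ spec Dr * ‖c‖ * spec ((1 - Pbb) * Jh p * Φ) * ‖ε‖ :=
    inner_le_mul_norm_of_norm_le <| (norm_mv_le _ _).trans <| by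
      rw [mul_right_comm, mul_assoc]
      gcongr
      · exact spec_nonneg _
      · exact spec_transpose (((1 - Pbb) * Jh p * Φ)) ▸ norm_mv_le _ _
  rw [mv_transpose_sub_rom_eq hgH x x' dv uv xr]
  simp only [inner_add_right]
  linarith

end ReducedOrderError

section IntegralBounds

variable {T : ℝ}

theorem integral_sq_norm_sub_mv_eq {a b : ℕ} {M : Matrix (Fin a) (Fin b) ℝ} (hM : Mᵀ * M = 1)
    (hT : 0 ≤ T) {x : ℝ → Evec a} {y : ℝ → Evec b} (hx : ContinuousOn x (Icc 0 T))
    (hy : ContinuousOn y (Icc 0 T)) :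
    ∫ t in (0 : ℝ)..T, ‖x t - mv M (y t)‖ ^ 2
      = (∫ t in (0 : ℝ)..T, ‖x t - mv M (mv Mᵀ (x t))‖ ^ 2)
        + ∫ t in (0 : ℝ)..T, ‖mv Mᵀ (x t) - y t‖ ^ 2 := by
  rw [← intervalIntegral.integral_add (f := fun t => ‖x t - mv M (mv Mᵀ (x t))‖ ^ 2)
    (g := fun t => ‖mv Mᵀ (x t) - y t‖ ^ 2)
    (((hx.sub ((hx.mv _).mv _)).norm.pow 2).intervalIntegrable_of_Icc hT)
    ((((hx.mv _).sub hy).norm.pow 2).intervalIntegrable_of_Icc hT)]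
  exact intervalIntegral.integral_congr fun t _ => norm_sub_mv_sq_of_orthonormal_columns hM _ _

theorem integral_sq_add_le (hT : 0 ≤ T) {f₁ f₂ f₃ f₄ : ℝ → ℝ} (k₃ k₄ : ℝ)
    (h₁ : ContinuousOn f₁ (Icc 0 T)) (h₂ : ContinuousOn f₂ (Icc 0 T))
    (h₃ : ContinuousOn f₃ (Icc 0 T)) (h₄ : ContinuousOn f₄ (Icc 0 T)) :
    ∫ t in (0 : ℝ)..T, (f₁ t + f₂ t + k₃ * f₃ t + k₄ * f₄ t) ^ 2
      ≤ 4 * ((∫ t in (0 : ℝ)..T, f₁ t ^ 2) + (∫ t in (0 : ℝ)..T, f₂ t ^ 2)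
        + k₃ ^ 2 * (∫ t in (0 : ℝ)..T, f₃ t ^ 2) + k₄ ^ 2 * ∫ t in (0 : ℝ)..T, f₄ t ^ 2) := by
  have hi : ∀ {f : ℝ → ℝ}, ContinuousOn f (Icc 0 T) →
      IntervalIntegrable (fun t => f t ^ 2) volume 0 T :=
    fun hf => (hf.pow 2).intervalIntegrable_of_Icc hT
  have hi₃ := (hi h₃).const_mul (k₃ ^ 2)
  have hi₄ := (hi h₄).const_mul (k₄ ^ 2)
  calc ∫ t in (0 : ℝ)..T, (f₁ t + f₂ t + k₃ * f₃ t + k₄ * f₄ t) ^ 2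
      ≤ ∫ t in (0 : ℝ)..T, 4 * (f₁ t ^ 2 + f₂ t ^ 2 + k₃ ^ 2 * f₃ t ^ 2 + k₄ ^ 2 * f₄ t ^ 2) :=
        intervalIntegral.integral_mono_on hT
          ((((h₁.add h₂).add (continuousOn_const.mul h₃)).add
            (continuousOn_const.mul h₄)).pow 2 |>.intervalIntegrable_of_Icc hT)
          ((((hi h₁).add (hi h₂)).add hi₃).add hi₄ |>.const_mul 4)
          fun t _ => by
            nlinarith [sq_nonneg (f₁ t - f₂ t), sq_nonneg (f₁ t - k₃ * f₃ t),
              sq_nonneg (f₁ t - k₄ * f₄ t), sq_nonneg (f₂ t - k₃ * f₃ t),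
              sq_nonneg (f₂ t - k₄ * f₄ t), sq_nonneg (k₃ * f₃ t - k₄ * f₄ t)]
    _ = _ := by
        rw [intervalIntegral.integral_const_mul, intervalIntegral.integral_add
          (((hi h₁).add (hi h₂)).add hi₃) hi₄, intervalIntegral.integral_add
          ((hi h₁).add (hi h₂)) hi₃, intervalIntegral.integral_add (hi h₁) (hi h₂),
          intervalIntegral.integral_const_mul, intervalIntegral.integral_const_mul]

end IntegralBounds

theorem add_le_max_mul_of_le {T A G E C₂ C₃ I₁ I₂ I₃ I₄ : ℝ} (hT : 0 ≤ T) (hA : 0 ≤ A)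
    (hI₁ : 0 ≤ I₁) (hI₂ : 0 ≤ I₂) (hI₃ : 0 ≤ I₃) (hI₄ : 0 ≤ I₄) (hE : E ≤ T * A * G)
    (hG : G ≤ 4 * (I₂ + I₃ + C₂ ^ 2 * I₁ + C₃ ^ 2 * I₄)) :
    I₁ + E ≤ max (max (1 + C₂ ^ 2 * T * (4 * A)) (C₃ ^ 2 * T * (4 * A))) (T * (4 * A))
      * (I₁ + I₂ + I₃ + I₄) := by
  set β := T * (4 * A)
  set K := max (max (1 + C₂ ^ 2 * T * (4 * A)) (C₃ ^ 2 * T * (4 * A))) β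
  have hK₁ : 1 + C₂ ^ 2 * β ≤ K := by
    rw [← mul_assoc]; exact (le_max_left _ _).trans (le_max_left _ _)
  have hK₃ : C₃ ^ 2 * β ≤ K := by
    rw [← mul_assoc]; exact (le_max_right _ _).trans (le_max_left _ _)
  have hKβ : β ≤ K := le_max_right _ _
  have hE' : E ≤ β * (I₂ + I₃ + C₂ ^ 2 * I₁ + C₃ ^ 2 * I₄) :=
    hE.trans <| by
      calc T * A * G ≤ T * A * (4 * (I₂ + I₃ + C₂ ^ 2 * I₁ + C₃ ^ 2 * I₄)) := by gcongr
        _ = β * (I₂ + I₃ + C₂ ^ 2 * I₁ + C₃ ^ 2 * I₄) := by ring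
  calc I₁ + E ≤ (1 + C₂ ^ 2 * β) * I₁ + β * I₂ + β * I₃ + C₃ ^ 2 * β * I₄ := by linarith
    _ ≤ K * I₁ + K * I₂ + K * I₃ + K * I₄ := by gcongr
    _ = K * (I₁ + I₂ + I₃ + I₄) := by ring

theorem state_error_bound_pH_OpInf_DEIM_general {n r d m m0 : ℕ}
    (T : ℝ) (hT : 0 < T)
    (x x' : ℝ → Evec n)
    (hx : ∀ t ∈ Set.Icc (0 : ℝ) T, HasDerivAt x (x' t) t)
    (hx'c : ContinuousOn x' (Set.Icc (0 : ℝ) T))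
    (u : ℝ → Evec m) (hu : ContinuousOn u (Set.Icc (0 : ℝ) T))
    (dfun : ℝ → Evec n) (hdfun : ContinuousOn dfun (Set.Icc (0 : ℝ) T))
    (Φ : Matrix (Fin n) (Fin r) ℝ) (hΦ : Φᵀ * Φ = 1)
    (Q : Matrix (Fin n) (Fin n) ℝ) (c : Evec d)
    (Jh : Evec n → Matrix (Fin d) (Fin n) ℝ)
    (gH : Evec n → Evec n) (hgH : ∀ p, gH p = mv Q p + mv (Jh p)ᵀ c)
    (CLipH : ℝ) (hLipH : ∀ a b : Evec n, ‖gH a - gH b‖ ≤ CLipH * ‖a - b‖)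
    (CLipJ : ℝ) (hLipJ : ∀ a b : Evec n, spec (Jh a - Jh b) ≤ CLipJ * ‖a - b‖)
    (Ψ P : Matrix (Fin d) (Fin m0) ℝ)
    (hΨ : Ψᵀ * Ψ = 1)
    (hP : ∃ ℘ : Fin m0 → Fin d, Function.Injective ℘ ∧
      ∀ i j, P i j = if i = ℘ j then 1 else 0)
    (Pbb : Matrix (Fin d) (Fin d) ℝ) (hPbb : Pbb = Ψ * (Pᵀ * Ψ)⁻¹ * Pᵀ)
    (Dr : Matrix (Fin r) (Fin r) ℝ) (Br : Matrix (Fin r) (Fin m) ℝ)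
    (Qr : Matrix (Fin r) (Fin r) ℝ) (hQrdef : Qr = Φᵀ * Q * Φ)
    (xr : ℝ → Evec r)
    (hxr : ∀ t ∈ Set.Icc (0 : ℝ) T, HasDerivAt xr
      (mv Dr (mv Qr (xr t) + mv Φᵀ (mv (Jh (mv Φ (xr t)))ᵀ (mv Pbbᵀ c))) + mv Br (u t)) t)
    (hxr0 : xr 0 = mv Φᵀ (x 0))
    (C₁ C₂ C₃ α CT : ℝ)
    (hC₁ : C₁ = logNorm (Φ * Dr * Φᵀ * Q)
      + spec (Dr * Φᵀ) * CLipJ * spec ((Pᵀ * Ψ)⁻¹) * ‖c‖)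
    (hC₂ : C₂ = spec (Dr * Φᵀ) * CLipH)
    (hC₃ : C₃ = spec Dr * ‖c‖)
    (hα : α = 4 * ∫ τ in (0 : ℝ)..T, Real.exp (2 * C₁ * (T - τ)))
    (hCT : CT = max (max (1 + C₂ ^ 2 * T * α) (C₃ ^ 2 * T * α)) (T * α)) :
    ∫ t in (0 : ℝ)..T, ‖x t - mv Φ (xr t)‖ ^ 2 ≤
      CT * ((∫ t in (0 : ℝ)..T, ‖x t - mv Φ (mv Φᵀ (x t))‖ ^ 2)
        + (∫ t in (0 : ℝ)..T, ‖x' t - dfun t‖ ^ 2)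
        + (∫ t in (0 : ℝ)..T,
            ‖mv Φᵀ (dfun t) - mv Dr (mv Φᵀ (gH (x t))) - mv Br (u t)‖ ^ 2)
        + (∫ t in (0 : ℝ)..T,
            (spec ((1 - Pbb) * Jh (mv Φ (mv Φᵀ (x t))) * Φ)) ^ 2)) := by
  obtain ⟨℘, h℘, hPsel⟩ := hP
  have hPbbK : spec Pbb ≤ spec (Pᵀ * Ψ)⁻¹ :=
    hPbb ▸ spec_mul_mul_transpose_le hΨ (transpose_mul_self_of_selection h℘ hPsel) _
  subst hC₁ hC₂ hC₃ hα hCT hQrdef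
  have hxc : ContinuousOn x (Icc 0 T) := HasDerivAt.continuousOn hx
  have hpc : ContinuousOn (fun t => mv Φ (mv Φᵀ (x t))) (Icc 0 T) := (hxc.mv _).mv _
  have hf₁ : ContinuousOn (fun t => ‖x' t - dfun t‖) (Icc 0 T) := (hx'c.sub hdfun).norm
  have hf₂ : ContinuousOn (fun t => ‖mv Φᵀ (dfun t) - mv Dr (mv Φᵀ (gH (x t))) - mv Br (u t)‖)
      (Icc 0 T) := (((hdfun.mv _).sub ((((continuous_of_norm_sub_le hLipH).comp_continuousOn
        hxc).mv _).mv _)).sub (hu.mv _)).norm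
  have hf₃ : ContinuousOn (fun t => ‖x t - mv Φ (mv Φᵀ (x t))‖) (Icc 0 T) := (hxc.sub hpc).norm
  have hF : Continuous fun v => ‖(1 - Pbb) * Jh v * Φ‖ :=
    ((continuous_const.matrix_mul (continuous_of_norm_sub_le (f := Jh) hLipJ)).matrix_mul
      continuous_const :).norm
  have hf₄ : ContinuousOn (fun t => spec ((1 - Pbb) * Jh (mv Φ (mv Φᵀ (x t))) * Φ)) (Icc 0 T) :=
    hF.comp_continuousOn hpc
  set g : ℝ → ℝ := fun t => ‖x' t - dfun t‖
    + ‖mv Φᵀ (dfun t) - mv Dr (mv Φᵀ (gH (x t))) - mv Br (u t)‖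
    + spec (Dr * Φᵀ) * CLipH * ‖x t - mv Φ (mv Φᵀ (x t))‖
    + spec Dr * ‖c‖ * spec ((1 - Pbb) * Jh (mv Φ (mv Φᵀ (x t))) * Φ)
  have hg0 : ∀ t ∈ Icc 0 T, 0 ≤ g t := fun t _ =>
    add_nonneg (add_nonneg (by positivity) (by
      rw [mul_assoc]; exact mul_nonneg (spec_nonneg _) ((norm_nonneg _).trans (hLipH _ _))))
      (mul_nonneg (mul_nonneg (spec_nonneg _) (norm_nonneg _)) (spec_nonneg _))
  have hE := integral_sq_norm_le_of_inner_deriv_le (e := fun t => mv Φᵀ (x t) - xr t) (g := g)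
    hT.le (fun t ht => ((hx t ht).mv Φᵀ).sub (hxr t ht)) (sub_eq_zero.2 hxr0.symm)
    (((hf₁.add hf₂).add (continuousOn_const.mul hf₃)).add (continuousOn_const.mul hf₄)) hg0
    fun t _ => inner_mv_transpose_sub_rom_le hΦ hgH hLipH hLipJ hPbbK _ _ _ _ _
  have hI : ∀ f : ℝ → ℝ, 0 ≤ ∫ t in (0 : ℝ)..T, f t ^ 2 := fun f =>
    intervalIntegral.integral_nonneg hT.le fun _ _ => sq_nonneg _
  rw [integral_sq_norm_sub_mv_eq hΦ hT.le hxc (HasDerivAt.continuousOn hxr)]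
  exact add_le_max_mul_of_le hT.le
    (intervalIntegral.integral_nonneg hT.le fun _ _ => (Real.exp_pos _).le)
    (hI _) (hI _) (hI _) (hI _) hE (integral_sq_add_le hT.le _ _ hf₁ hf₂ hf₃ hf₄)

/-- State error bound for the pH-OpInf-DEIM reduced-order
model: with Hamiltonian `H(x) = (1/2)xᵀQx + cᵀh(x)`, gradient
`∇H(x) = Qx + J_h(x)ᵀc`, DEIM projector `ℙ = Ψ(PᵀΨ)⁻¹Pᵀ` and ROM
`ẋ_r = D_r(Q_r x_r + Φᵀ J_h(Φ x_r)ᵀ ℙᵀ c) + B_r u`, `x_r(0) = Φᵀx(0)`,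
the squared `L²` state error is bounded by `C(T)` times the sum of the
projection, data, optimization and hyper-reduction errors. -/
theorem state_error_bound_pH_OpInf_DEIM {n r d m m0 : ℕ}
    (T : ℝ) (hT : 0 < T)
    (x x' : ℝ → Evec n)
    (hx : ∀ t ∈ Set.Icc (0 : ℝ) T, HasDerivAt x (x' t) t)
    (hx'c : ContinuousOn x' (Set.Icc (0 : ℝ) T))
    (u : ℝ → Evec m) (hu : ContinuousOn u (Set.Icc (0 : ℝ) T))
    (dfun : ℝ → Evec n) (hdfun : ContinuousOn dfun (Set.Icc (0 : ℝ) T))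
    (Φ : Matrix (Fin n) (Fin r) ℝ) (hΦ : Φᵀ * Φ = 1)
    (Q : Matrix (Fin n) (Fin n) ℝ) (hQ : Qᵀ = Q) (c : Evec d)
    (h : Evec n → Evec d) (Jh : Evec n → Matrix (Fin d) (Fin n) ℝ)
    (hJac : ∀ p, HasFDerivAt h
      (LinearMap.toContinuousLinearMap (Matrix.toEuclideanLin (Jh p))) p)
    (gH : Evec n → Evec n) (hgH : ∀ p, gH p = mv Q p + mv (Jh p)ᵀ c)
    (CLipH : ℝ) (hLipH : ∀ a b : Evec n, ‖gH a - gH b‖ ≤ CLipH * ‖a - b‖)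
    (CLipJ : ℝ) (hLipJ : ∀ a b : Evec n, spec (Jh a - Jh b) ≤ CLipJ * ‖a - b‖)
    (Ψ P : Matrix (Fin d) (Fin m0) ℝ)
    (hΨ : Ψᵀ * Ψ = 1)
    (hP : ∃ ℘ : Fin m0 → Fin d, Function.Injective ℘ ∧
      ∀ i j, P i j = if i = ℘ j then 1 else 0)
    (hPΨ : IsUnit (Pᵀ * Ψ))
    (Pbb : Matrix (Fin d) (Fin d) ℝ) (hPbb : Pbb = Ψ * (Pᵀ * Ψ)⁻¹ * Pᵀ)
    (Dr : Matrix (Fin r) (Fin r) ℝ) (Br : Matrix (Fin r) (Fin m) ℝ)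
    (Qr : Matrix (Fin r) (Fin r) ℝ) (hQrdef : Qr = Φᵀ * Q * Φ)
    (xr : ℝ → Evec r)
    (hxr : ∀ t ∈ Set.Icc (0 : ℝ) T, HasDerivAt xr
      (mv Dr (mv Qr (xr t) + mv Φᵀ (mv (Jh (mv Φ (xr t)))ᵀ (mv Pbbᵀ c))) + mv Br (u t)) t)
    (hxr0 : xr 0 = mv Φᵀ (x 0))
    (C₁ C₂ C₃ α CT : ℝ)
    (hC₁ : C₁ = logNorm (Φ * Dr * Φᵀ * Q)
      + spec (Dr * Φᵀ) * CLipJ * spec ((Pᵀ * Ψ)⁻¹) * ‖c‖)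
    (hC₂ : C₂ = spec (Dr * Φᵀ) * CLipH)
    (hC₃ : C₃ = spec Dr * ‖c‖)
    (hα : α = 4 * ∫ τ in (0 : ℝ)..T, Real.exp (2 * C₁ * (T - τ)))
    (hCT : CT = max (max (1 + C₂ ^ 2 * T * α) (C₃ ^ 2 * T * α)) (T * α)) :
    ∫ t in (0 : ℝ)..T, ‖x t - mv Φ (xr t)‖ ^ 2 ≤
      CT * ((∫ t in (0 : ℝ)..T, ‖x t - mv Φ (mv Φᵀ (x t))‖ ^ 2)
        + (∫ t in (0 : ℝ)..T, ‖x' t - dfun t‖ ^ 2)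
        + (∫ t in (0 : ℝ)..T,
            ‖mv Φᵀ (dfun t) - mv Dr (mv Φᵀ (gH (x t))) - mv Br (u t)‖ ^ 2)
        + (∫ t in (0 : ℝ)..T,
            (spec ((1 - Pbb) * Jh (mv Φ (mv Φᵀ (x t))) * Φ)) ^ 2)) :=
  state_error_bound_pH_OpInf_DEIM_general T hT x x' hx hx'c u hu dfun hdfun Φ hΦ Q c Jh gH hgH CLipH
    hLipH CLipJ hLipJ Ψ P hΨ hP Pbb hPbb Dr Br Qr hQrdef xr hxr hxr0 C₁ C₂ C₃ α CT hC₁ hC₂ hC₃ hα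
    hCT
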